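/- Let (X, 𝒜, μ) be a probability space, Θ a nonempty finite set, B ≥ 0, and L : Θ → X → ℝ measurable in x with |L(θ, x)| ≤ B for all θ, x. Let N ≥ 1. Let c : Fin N → X be i.i.d. with law μ, let c' : Fin N → X be an independent i.i.d. 'ghost' sample with law μ, and let σ : Fin N → {−1, +1} be i.i.d. Rademacher signs (P(σ_i = 1) = P(σ_i = −1) = ½), independent of c and c'. Then E[max_{θ ∈ Θ} (1/N) ∑_{i=1}^N (∫ L(θ, x) dμ(x) − L(θ, c_i))] ≤ 2 E[max_{θ ∈ Θ} (1/N) ∑_{i=1}^N σ_i L(θ, c_i)]. -/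
import Mathlib


open MeasureTheory
open scoped ENNReal

private lemma integral_comp_mp {α β : Type*} [MeasurableSpace α] [MeasurableSpace β]
    {m : Measure α} {n : Measure β} {f : α → β} (h : MeasurePreserving f m n) {g : β → ℝ}
    (hg : AEStronglyMeasurable g n) :
    ∫ a, g (f a) ∂m = ∫ b, g b ∂n := by
  rw [← h.map_eq] at hg
  rw [← h.map_eq, integral_map h.measurable.aemeasurable hg]

private lemma ae_comp_mp {α β : Type*} [MeasurableSpace α] [MeasurableSpace β]
    {m : Measure α} {n : Measure β} {f : α → β} (h : MeasurePreserving f m n) {p : β → Prop}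
    (hp : MeasurableSet {y | p y}) (hae : ∀ᵐ y ∂n, p y) : ∀ᵐ a ∂m, p (f a) := by
  rw [← h.map_eq] at hae
  exact (ae_map_iff h.measurable.aemeasurable hp).mp hae

private lemma measurable_sup'_fun {α Θ : Type*} [MeasurableSpace α] [Fintype Θ] [Nonempty Θ]
    {f : Θ → α → ℝ} (hf : ∀ θ, Measurable (f θ)) :
    Measurable (fun a => Finset.univ.sup' Finset.univ_nonempty (fun θ => f θ a)) := by
  have h := Finset.measurable_sup' (s := (Finset.univ : Finset Θ)) Finset.univ_nonempty
    (fun θ _ => hf θ)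
  have heq : (Finset.univ.sup' Finset.univ_nonempty f)
      = fun a => Finset.univ.sup' Finset.univ_nonempty (fun θ => f θ a) :=
    funext fun a => Finset.sup'_apply _ _ a
  rwa [heq] at h

private lemma integrable_sup'_fun {α Θ : Type*} [MeasurableSpace α] (m : Measure α)
    [IsFiniteMeasure m] [Fintype Θ] [Nonempty Θ] {f : Θ → α → ℝ}
    (hmeas : ∀ θ, Measurable (f θ)) (C : ℝ)
    (hC : ∀ᵐ a ∂m, ∀ θ, |f θ a| ≤ C) :
    Integrable (fun a => Finset.univ.sup' Finset.univ_nonempty (fun θ => f θ a)) m := by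
  refine ⟨(measurable_sup'_fun hmeas).aestronglyMeasurable, ?_⟩
  refine HasFiniteIntegral.of_bounded (C := C) ?_
  filter_upwards [hC] with a ha
  rw [Real.norm_eq_abs, abs_le]
  obtain ⟨θ₀⟩ := (inferInstance : Nonempty Θ)
  exact ⟨le_trans (abs_le.mp (ha θ₀)).1
      (Finset.le_sup' (fun θ => f θ a) (Finset.mem_univ θ₀)),
    Finset.sup'_le _ _ fun θ _ => (abs_le.mp (ha θ)).2⟩

private lemma abs_avg_le {N : ℕ} (hN : 1 ≤ N) {f : Fin N → ℝ} {C : ℝ} (hf : ∀ i, |f i| ≤ C) :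
    |(1 / (N : ℝ)) * ∑ i, f i| ≤ C := by
  have hN0 : (0 : ℝ) < N := by exact_mod_cast hN
  rw [abs_mul, abs_of_nonneg (by positivity : (0:ℝ) ≤ 1 / (N:ℝ))]
  have h1 : |∑ i, f i| ≤ (N : ℝ) * C := by
    refine le_trans (Finset.abs_sum_le_sum_abs f Finset.univ) ?_
    calc ∑ i, |f i| ≤ ∑ _i : Fin N, C := Finset.sum_le_sum fun i _ => hf i
      _ = (N : ℝ) * C := by simp [Finset.sum_const, Finset.card_univ, nsmul_eq_mul]
  calc 1 / (N:ℝ) * |∑ i, f i| ≤ 1 / (N:ℝ) * ((N:ℝ) * C) :=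
        mul_le_mul_of_nonneg_left h1 (by positivity)
    _ = C := by field_simp

private lemma measurePreserving_eval' {ι : Type*} [Fintype ι] {π : ι → Type*}
    [∀ i, MeasurableSpace (π i)] (μ : ∀ i, Measure (π i)) [∀ i, IsProbabilityMeasure (μ i)]
    (i : ι) : MeasurePreserving (Function.eval i) (Measure.pi μ) (μ i) := by
  classical
  refine ⟨measurable_pi_apply i, ?_⟩
  ext s hs
  rw [Measure.map_apply (measurable_pi_apply i) hs, Set.eval_preimage, Measure.pi_pi]
  rw [Finset.prod_eq_single i
    (fun j _ hj => by rw [Function.update_of_ne hj]; exact measure_univ) (by simp)]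
  simp

set_option maxHeartbeats 1000000 in
/-- **Symmetrization bound.**
With an i.i.d. sample `c ∼ μ^N`, an independent i.i.d. ghost sample `c' ∼ μ^N`,
and independent Rademacher signs `σ` (uniform on `{−1, +1}`), the expected
supremum over a finite policy class of the centered empirical cost is bounded
by twice the expected Rademacher complexity. -/
theorem symmetrization_bound
    {X : Type*} [MeasurableSpace X] (μ : Measure X) [IsProbabilityMeasure μ]
    {Θ : Type*} [Fintype Θ] [Nonempty Θ]
    (B : ℝ) (hB : 0 ≤ B) (L : Θ → X → ℝ)
    (hLmeas : ∀ θ, Measurable (L θ)) (hLbdd : ∀ θ x, |L θ x| ≤ B)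
    (N : ℕ) (hN : 1 ≤ N)
    (ν : Measure ℝ)
    (hν : ν = (2⁻¹ : ℝ≥0∞) • Measure.dirac (1 : ℝ)
            + (2⁻¹ : ℝ≥0∞) • Measure.dirac (-1 : ℝ)) :
    ∫ ω : (Fin N → X) × ((Fin N → X) × (Fin N → ℝ)),
        Finset.univ.sup' Finset.univ_nonempty
          (fun θ : Θ => (1 / (N : ℝ)) *
            ∑ i, ((∫ x, L θ x ∂μ) - L θ (ω.1 i)))
        ∂((Measure.pi fun _ : Fin N => μ).prod
            ((Measure.pi fun _ : Fin N => μ).prod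
              (Measure.pi fun _ : Fin N => ν)))
      ≤ 2 * ∫ ω : (Fin N → X) × ((Fin N → X) × (Fin N → ℝ)),
          Finset.univ.sup' Finset.univ_nonempty
            (fun θ : Θ => (1 / (N : ℝ)) * ∑ i, ω.2.2 i * L θ (ω.1 i))
          ∂((Measure.pi fun _ : Fin N => μ).prod
              ((Measure.pi fun _ : Fin N => μ).prod
                (Measure.pi fun _ : Fin N => ν))) := by
  classical
  have hνprob : IsProbabilityMeasure ν := by
    constructor
    rw [hν]
    simp only [Measure.add_apply, Measure.smul_apply, smul_eq_mul, measure_univ, mul_one]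
    exact ENNReal.inv_two_add_inv_two
  set A : Measure (Fin N → X) := Measure.pi fun _ : Fin N => μ with hAdef
  set S : Measure (Fin N → ℝ) := Measure.pi fun _ : Fin N => ν with hSdef
  haveI : IsProbabilityMeasure A := by rw [hAdef]; infer_instance
  haveI : IsProbabilityMeasure S := by rw [hSdef]; infer_instance
  -- basic facts
  have habs2B : ∀ (θ : Θ) (x y : X), |L θ x - L θ y| ≤ 2 * B := fun θ x y => by
    have h1 := abs_add_le (L θ x) (-(L θ y))
    have h2 := hLbdd θ x
    have h3 := hLbdd θ y
    rw [abs_neg] at h1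
    rw [sub_eq_add_neg]
    linarith
  have hmB : ∀ θ : Θ, |∫ x, L θ x ∂μ| ≤ B := fun θ => by
    rw [← Real.norm_eq_abs]
    calc ‖∫ x, L θ x ∂μ‖ ≤ B * (μ Set.univ).toReal :=
          norm_integral_le_of_norm_le_const (ae_of_all _ fun x => by
            rw [Real.norm_eq_abs]; exact hLbdd θ x)
      _ = B := by simp
  have measL1 : ∀ (θ : Θ) (i : Fin N), Measurable (fun c : Fin N → X => L θ (c i)) :=
    fun θ i => (hLmeas θ).comp (measurable_pi_apply i)
  have intL : ∀ (θ : Θ) (i : Fin N), Integrable (fun c : Fin N → X => L θ (c i)) A :=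
    fun θ i => ⟨(measL1 θ i).aestronglyMeasurable, HasFiniteIntegral.of_bounded (C := B)
      (ae_of_all _ fun c => by rw [Real.norm_eq_abs]; exact hLbdd θ (c i))⟩
  -- measure-preserving projections
  have mpfst : MeasurePreserving (Prod.fst) (A.prod (A.prod S)) A :=
    ⟨measurable_fst, by rw [Measure.map_fst_prod]; simp⟩
  have mpsnd : MeasurePreserving (Prod.snd) (A.prod (A.prod S)) (A.prod S) :=
    ⟨measurable_snd, by rw [Measure.map_snd_prod]; simp⟩
  have mpsndAS : MeasurePreserving (Prod.snd) (A.prod S) S :=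
    ⟨measurable_snd, by rw [Measure.map_snd_prod]; simp⟩
  have mpsndQ : MeasurePreserving (Prod.snd) ((A.prod A).prod S) S :=
    ⟨measurable_snd, by rw [Measure.map_snd_prod]; simp⟩
  have mpevalA : ∀ i : Fin N, MeasurePreserving (Function.eval i) A μ := fun i => by
    rw [hAdef]; exact measurePreserving_eval' (fun _ => μ) i
  -- a.e. the signs are ±1
  have hsetR : MeasurableSet {x : ℝ | x = 1 ∨ x = -1} := by
    have h : {x : ℝ | x = 1 ∨ x = -1} = {1} ∪ {-1} := by
      ext x; simp only [Set.mem_union, Set.mem_singleton_iff, Set.mem_setOf_eq]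
    rw [h]; exact (measurableSet_singleton 1).union (measurableSet_singleton (-1))
  have haeν : ∀ᵐ x ∂ν, x = 1 ∨ x = -1 := by
    rw [ae_iff, hν]
    have hc : MeasurableSet {x : ℝ | ¬(x = 1 ∨ x = -1)} := hsetR.compl
    simp only [Measure.add_apply, Measure.smul_apply, smul_eq_mul]
    rw [Measure.dirac_apply' _ hc, Measure.dirac_apply' _ hc]
    simp
  have hsetS : MeasurableSet {σ : Fin N → ℝ | ∀ i, σ i = 1 ∨ σ i = -1} := by
    have h : {σ : Fin N → ℝ | ∀ i, σ i = 1 ∨ σ i = -1}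
        = ⋂ i, (fun σ : Fin N → ℝ => σ i) ⁻¹' {x | x = 1 ∨ x = -1} := by
      ext σ; simp [Set.mem_iInter]
    rw [h]
    exact MeasurableSet.iInter fun i => (measurable_pi_apply i) hsetR
  have haeS : ∀ᵐ σ ∂S, ∀ i, σ i = 1 ∨ σ i = -1 := by
    rw [hSdef]
    exact ae_all_iff.mpr fun i =>
      ae_comp_mp (measurePreserving_eval' (fun _ => ν) i) hsetR haeν
  have haeP : ∀ᵐ ω : (Fin N → X) × ((Fin N → X) × (Fin N → ℝ)) ∂(A.prod (A.prod S)),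
      ∀ i, ω.2.2 i = 1 ∨ ω.2.2 i = -1 :=
    ae_comp_mp (mpsndAS.comp mpsnd) hsetS haeS
  have haeAS : ∀ᵐ q : (Fin N → X) × (Fin N → ℝ) ∂(A.prod S),
      ∀ i, q.2 i = 1 ∨ q.2 i = -1 :=
    ae_comp_mp mpsndAS hsetS haeS
  have haeQ : ∀ᵐ q : ((Fin N → X) × (Fin N → X)) × (Fin N → ℝ) ∂((A.prod A).prod S),
      ∀ i, q.2 i = 1 ∨ q.2 i = -1 :=
    ae_comp_mp mpsndQ hsetS haeS
  -- measurability of the various integrands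
  have measF1 : ∀ θ : Θ, Measurable (fun c : Fin N → X =>
      (1 / (N : ℝ)) * ∑ i, ((∫ x, L θ x ∂μ) - L θ (c i))) := fun θ =>
    (Finset.measurable_sum Finset.univ fun i _ => measurable_const.sub (measL1 θ i)).const_mul _
  have measg : ∀ θ : Θ, Measurable (fun p : (Fin N → X) × (Fin N → X) =>
      (1 / (N : ℝ)) * ∑ i, (L θ (p.2 i) - L θ (p.1 i))) := fun θ =>
    (Finset.measurable_sum Finset.univ fun i _ =>
      ((hLmeas θ).comp ((measurable_pi_apply i).comp measurable_snd)).sub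
        ((hLmeas θ).comp ((measurable_pi_apply i).comp measurable_fst))).const_mul _
  have measG : ∀ θ : Θ, Measurable (fun ω : (Fin N → X) × ((Fin N → X) × (Fin N → ℝ)) =>
      (1 / (N : ℝ)) * ∑ i, ω.2.2 i * (L θ (ω.2.1 i) - L θ (ω.1 i))) := fun θ =>
    (Finset.measurable_sum Finset.univ fun i _ =>
      (((measurable_pi_apply i).comp (measurable_snd.comp measurable_snd)).mul
        (((hLmeas θ).comp ((measurable_pi_apply i).comp
            (measurable_fst.comp measurable_snd))).sub
          ((hLmeas θ).comp ((measurable_pi_apply i).comp measurable_fst))))).const_mul _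
  have measGpa : ∀ θ : Θ, Measurable
      (fun q : ((Fin N → X) × (Fin N → X)) × (Fin N → ℝ) =>
        (1 / (N : ℝ)) * ∑ i, q.2 i * (L θ (q.1.2 i) - L θ (q.1.1 i))) := fun θ =>
    (Finset.measurable_sum Finset.univ fun i _ =>
      (((measurable_pi_apply i).comp measurable_snd).mul
        (((hLmeas θ).comp ((measurable_pi_apply i).comp
            (measurable_snd.comp measurable_fst))).sub
          ((hLmeas θ).comp ((measurable_pi_apply i).comp
            (measurable_fst.comp measurable_fst)))))).const_mul _
  have measH : ∀ θ : Θ, Measurable (fun q : (Fin N → X) × (Fin N → ℝ) =>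
      (1 / (N : ℝ)) * ∑ i, q.2 i * L θ (q.1 i)) := fun θ =>
    (Finset.measurable_sum Finset.univ fun i _ =>
      (((measurable_pi_apply i).comp measurable_snd).mul
        ((hLmeas θ).comp ((measurable_pi_apply i).comp measurable_fst)))).const_mul _
  have measHneg : ∀ θ : Θ, Measurable (fun q : (Fin N → X) × (Fin N → ℝ) =>
      (1 / (N : ℝ)) * ∑ i, (-(q.2 i)) * L θ (q.1 i)) := fun θ =>
    (Finset.measurable_sum Finset.univ fun i _ =>
      ((((measurable_pi_apply i).comp measurable_snd).neg).mul
        ((hLmeas θ).comp ((measurable_pi_apply i).comp measurable_fst)))).const_mul _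
  have measH1 : ∀ θ : Θ, Measurable (fun ω : (Fin N → X) × ((Fin N → X) × (Fin N → ℝ)) =>
      (1 / (N : ℝ)) * ∑ i, ω.2.2 i * L θ (ω.2.1 i)) := fun θ =>
    (Finset.measurable_sum Finset.univ fun i _ =>
      (((measurable_pi_apply i).comp (measurable_snd.comp measurable_snd)).mul
        ((hLmeas θ).comp ((measurable_pi_apply i).comp
          (measurable_fst.comp measurable_snd))))).const_mul _
  have measH2 : ∀ θ : Θ, Measurable (fun ω : (Fin N → X) × ((Fin N → X) × (Fin N → ℝ)) =>
      (1 / (N : ℝ)) * ∑ i, (-(ω.2.2 i)) * L θ (ω.1 i)) := fun θ =>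
    (Finset.measurable_sum Finset.univ fun i _ =>
      ((((measurable_pi_apply i).comp (measurable_snd.comp measurable_snd)).neg).mul
        ((hLmeas θ).comp ((measurable_pi_apply i).comp measurable_fst)))).const_mul _
  -- integrability
  have intF1 : Integrable (fun c : Fin N → X => Finset.univ.sup' Finset.univ_nonempty
      (fun θ : Θ => (1 / (N : ℝ)) * ∑ i, ((∫ x, L θ x ∂μ) - L θ (c i)))) A :=
    integrable_sup'_fun _ measF1 (2 * B) (ae_of_all _ fun c θ =>
      abs_avg_le hN fun i => by
        have h1 := hmB θ
        have h2 := hLbdd θ (c i)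
        have := abs_add_le (∫ x, L θ x ∂μ) (-(L θ (c i)))
        rw [abs_neg] at this
        rw [sub_eq_add_neg]
        linarith)
  have intg : Integrable (fun p : (Fin N → X) × (Fin N → X) =>
      Finset.univ.sup' Finset.univ_nonempty
        (fun θ : Θ => (1 / (N : ℝ)) * ∑ i, (L θ (p.2 i) - L θ (p.1 i)))) (A.prod A) :=
    integrable_sup'_fun _ measg (2 * B) (ae_of_all _ fun p θ =>
      abs_avg_le hN fun i => habs2B θ (p.2 i) (p.1 i))
  have intG : Integrable (fun ω : (Fin N → X) × ((Fin N → X) × (Fin N → ℝ)) =>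
      Finset.univ.sup' Finset.univ_nonempty
        (fun θ : Θ => (1 / (N : ℝ)) * ∑ i, ω.2.2 i * (L θ (ω.2.1 i) - L θ (ω.1 i))))
      (A.prod (A.prod S)) :=
    integrable_sup'_fun _ measG (2 * B) (by
      filter_upwards [haeP] with ω hω
      intro θ
      refine abs_avg_le hN fun i => ?_
      rcases hω i with h | h <;> rw [h]
      · rw [one_mul]; exact habs2B θ (ω.2.1 i) (ω.1 i)
      · rw [neg_one_mul, abs_neg]; exact habs2B θ (ω.2.1 i) (ω.1 i))
  have intGpa : Integrable (fun q : ((Fin N → X) × (Fin N → X)) × (Fin N → ℝ) =>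
      Finset.univ.sup' Finset.univ_nonempty
        (fun θ : Θ => (1 / (N : ℝ)) * ∑ i, q.2 i * (L θ (q.1.2 i) - L θ (q.1.1 i))))
      ((A.prod A).prod S) :=
    integrable_sup'_fun _ measGpa (2 * B) (by
      filter_upwards [haeQ] with q hq
      intro θ
      refine abs_avg_le hN fun i => ?_
      rcases hq i with h | h <;> rw [h]
      · rw [one_mul]; exact habs2B θ (q.1.2 i) (q.1.1 i)
      · rw [neg_one_mul, abs_neg]; exact habs2B θ (q.1.2 i) (q.1.1 i))
  have intH : Integrable (fun q : (Fin N → X) × (Fin N → ℝ) =>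
      Finset.univ.sup' Finset.univ_nonempty
        (fun θ : Θ => (1 / (N : ℝ)) * ∑ i, q.2 i * L θ (q.1 i))) (A.prod S) :=
    integrable_sup'_fun _ measH B (by
      filter_upwards [haeAS] with q hq
      intro θ
      refine abs_avg_le hN fun i => ?_
      rcases hq i with h | h <;> rw [h]
      · rw [one_mul]; exact hLbdd θ (q.1 i)
      · rw [neg_one_mul, abs_neg]; exact hLbdd θ (q.1 i))
  have intHneg : Integrable (fun q : (Fin N → X) × (Fin N → ℝ) =>
      Finset.univ.sup' Finset.univ_nonempty
        (fun θ : Θ => (1 / (N : ℝ)) * ∑ i, (-(q.2 i)) * L θ (q.1 i))) (A.prod S) :=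
    integrable_sup'_fun _ measHneg B (by
      filter_upwards [haeAS] with q hq
      intro θ
      refine abs_avg_le hN fun i => ?_
      rcases hq i with h | h <;> rw [h]
      · rw [neg_one_mul, abs_neg]; exact hLbdd θ (q.1 i)
      · rw [neg_neg, one_mul]; exact hLbdd θ (q.1 i))
  have intH1 : Integrable (fun ω : (Fin N → X) × ((Fin N → X) × (Fin N → ℝ)) =>
      Finset.univ.sup' Finset.univ_nonempty
        (fun θ : Θ => (1 / (N : ℝ)) * ∑ i, ω.2.2 i * L θ (ω.2.1 i))) (A.prod (A.prod S)) :=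
    integrable_sup'_fun _ measH1 B (by
      filter_upwards [haeP] with ω hω
      intro θ
      refine abs_avg_le hN fun i => ?_
      rcases hω i with h | h <;> rw [h]
      · rw [one_mul]; exact hLbdd θ (ω.2.1 i)
      · rw [neg_one_mul, abs_neg]; exact hLbdd θ (ω.2.1 i))
  have intH2 : Integrable (fun ω : (Fin N → X) × ((Fin N → X) × (Fin N → ℝ)) =>
      Finset.univ.sup' Finset.univ_nonempty
        (fun θ : Θ => (1 / (N : ℝ)) * ∑ i, (-(ω.2.2 i)) * L θ (ω.1 i))) (A.prod (A.prod S)) :=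
    integrable_sup'_fun _ measH2 B (by
      filter_upwards [haeP] with ω hω
      intro θ
      refine abs_avg_le hN fun i => ?_
      rcases hω i with h | h <;> rw [h]
      · rw [neg_one_mul, abs_neg]; exact hLbdd θ (ω.1 i)
      · rw [neg_neg, one_mul]; exact hLbdd θ (ω.1 i))
  -- Step 1: the LHS only depends on the first marginal
  have step1 : (∫ ω : (Fin N → X) × ((Fin N → X) × (Fin N → ℝ)),
        Finset.univ.sup' Finset.univ_nonempty
          (fun θ : Θ => (1 / (N : ℝ)) * ∑ i, ((∫ x, L θ x ∂μ) - L θ (ω.1 i)))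
        ∂(A.prod (A.prod S)))
      = ∫ c, Finset.univ.sup' Finset.univ_nonempty
          (fun θ : Θ => (1 / (N : ℝ)) * ∑ i, ((∫ x, L θ x ∂μ) - L θ (c i))) ∂A :=
    integral_comp_mp mpfst (measurable_sup'_fun measF1).aestronglyMeasurable
  -- Step 2: Jensen w.r.t. the ghost sample
  have step2 : (∫ c, Finset.univ.sup' Finset.univ_nonempty
          (fun θ : Θ => (1 / (N : ℝ)) * ∑ i, ((∫ x, L θ x ∂μ) - L θ (c i))) ∂A)
      ≤ ∫ p : (Fin N → X) × (Fin N → X), Finset.univ.sup' Finset.univ_nonempty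
          (fun θ : Θ => (1 / (N : ℝ)) * ∑ i, (L θ (p.2 i) - L θ (p.1 i))) ∂(A.prod A) := by
    have innerint : Integrable (fun c : Fin N → X =>
        ∫ c', Finset.univ.sup' Finset.univ_nonempty
          (fun θ : Θ => (1 / (N : ℝ)) * ∑ i, (L θ (c' i) - L θ (c i))) ∂A) A :=
      intg.integral_prod_left
    have step2b : (∫ c, (∫ c', Finset.univ.sup' Finset.univ_nonempty
          (fun θ : Θ => (1 / (N : ℝ)) * ∑ i, (L θ (c' i) - L θ (c i))) ∂A) ∂A)
        = ∫ p : (Fin N → X) × (Fin N → X), Finset.univ.sup' Finset.univ_nonempty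
          (fun θ : Θ => (1 / (N : ℝ)) * ∑ i, (L θ (p.2 i) - L θ (p.1 i))) ∂(A.prod A) :=
      (integral_prod _ intg).symm
    rw [← step2b]
    refine integral_mono intF1 innerint ?_
    intro c
    refine Finset.sup'_le _ _ fun θ _ => ?_
    have key : (∫ c', (1 / (N : ℝ)) * ∑ i, (L θ (c' i) - L θ (c i)) ∂A)
        = (1 / (N : ℝ)) * ∑ i, ((∫ x, L θ x ∂μ) - L θ (c i)) := by
      rw [integral_const_mul]
      congr 1
      rw [integral_finset_sum (f := fun (i : Fin N) (c' : Fin N → X) => L θ (c' i) - L θ (c i))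
        Finset.univ (fun i _ => (intL θ i).sub (integrable_const _))]
      refine Finset.sum_congr rfl fun i _ => ?_
      rw [integral_sub (intL θ i) (integrable_const _), integral_const]
      have heval := integral_comp_mp (f := Function.eval i) (g := L θ) (mpevalA i)
        (hLmeas θ).aestronglyMeasurable
      rw [heval]
      simp
    rw [← key]
    refine integral_mono ?_ ?_ fun c' =>
      Finset.le_sup' (fun θ : Θ => (1 / (N : ℝ)) * ∑ i, (L θ (c' i) - L θ (c i)))
        (Finset.mem_univ θ)
    · exact (integrable_finset_sum Finset.univ fun i _ =>
        (intL θ i).sub (integrable_const _)).const_mul _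
    · exact integrable_sup'_fun _ (fun θ' =>
        ((Finset.measurable_sum Finset.univ fun i _ =>
          (measL1 θ' i).sub measurable_const).const_mul _)) (2 * B)
        (ae_of_all _ fun c' θ' => abs_avg_le hN fun i => habs2B θ' (c' i) (c i))
  -- Step 3: symmetrization via the random signs
  have step3 : (∫ p : (Fin N → X) × (Fin N → X), Finset.univ.sup' Finset.univ_nonempty
          (fun θ : Θ => (1 / (N : ℝ)) * ∑ i, (L θ (p.2 i) - L θ (p.1 i))) ∂(A.prod A))
      = ∫ ω : (Fin N → X) × ((Fin N → X) × (Fin N → ℝ)),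
          Finset.univ.sup' Finset.univ_nonempty
            (fun θ : Θ => (1 / (N : ℝ)) * ∑ i, ω.2.2 i * (L θ (ω.2.1 i) - L θ (ω.1 i)))
          ∂(A.prod (A.prod S)) := by
    have h1 : (∫ ω : (Fin N → X) × ((Fin N → X) × (Fin N → ℝ)),
          Finset.univ.sup' Finset.univ_nonempty
            (fun θ : Θ => (1 / (N : ℝ)) * ∑ i, ω.2.2 i * (L θ (ω.2.1 i) - L θ (ω.1 i)))
          ∂(A.prod (A.prod S)))
        = ∫ q : ((Fin N → X) × (Fin N → X)) × (Fin N → ℝ),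
            Finset.univ.sup' Finset.univ_nonempty
              (fun θ : Θ => (1 / (N : ℝ)) * ∑ i, q.2 i * (L θ (q.1.2 i) - L θ (q.1.1 i)))
            ∂((A.prod A).prod S) :=
      (integral_comp_mp (measurePreserving_prodAssoc A A S)
        (measurable_sup'_fun measG).aestronglyMeasurable).symm
    rw [h1, integral_prod_symm _ intGpa]
    have h3 : ∀ᵐ σ ∂S, (∫ p : (Fin N → X) × (Fin N → X),
          Finset.univ.sup' Finset.univ_nonempty
            (fun θ : Θ => (1 / (N : ℝ)) * ∑ i, σ i * (L θ (p.2 i) - L θ (p.1 i)))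
          ∂(A.prod A))
        = ∫ p : (Fin N → X) × (Fin N → X), Finset.univ.sup' Finset.univ_nonempty
            (fun θ : Θ => (1 / (N : ℝ)) * ∑ i, (L θ (p.2 i) - L θ (p.1 i))) ∂(A.prod A) := by
      filter_upwards [haeS] with σ hσ
      -- the coordinatewise swap determined by σ
      have mppoint := measurePreserving_pi (fun _ : Fin N => μ.prod μ)
        (fun _ : Fin N => μ.prod μ)
        (f := fun i (x : X × X) => if σ i = 1 then x else x.swap)
        (fun i => by
          by_cases h : σ i = 1
          · simp only [h, eq_self_iff_true, if_true]
            exact MeasurePreserving.id _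
          · simp only [h, if_false]
            exact Measure.measurePreserving_swap)
      have mpe2 : MeasurePreserving (MeasurableEquiv.arrowProdEquivProdArrow X X (Fin N))
          (Measure.pi fun _ : Fin N => μ.prod μ) (A.prod A) := by
        rw [hAdef]
        exact measurePreserving_arrowProdEquivProdArrow X X (Fin N) (fun _ => μ) (fun _ => μ)
      have mpT := (mpe2.comp mppoint).comp (mpe2.symm _)
      have hmeasσ : ∀ θ : Θ, Measurable (fun p : (Fin N → X) × (Fin N → X) =>
          (1 / (N : ℝ)) * ∑ i, σ i * (L θ (p.2 i) - L θ (p.1 i))) := fun θ =>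
        (Finset.measurable_sum Finset.univ fun i _ =>
          (((hLmeas θ).comp ((measurable_pi_apply i).comp measurable_snd)).sub
            ((hLmeas θ).comp ((measurable_pi_apply i).comp measurable_fst))).const_mul
              (σ i)).const_mul _
      have hcomp := integral_comp_mp mpT
        (g := fun p : (Fin N → X) × (Fin N → X) =>
          Finset.univ.sup' Finset.univ_nonempty
            (fun θ : Θ => (1 / (N : ℝ)) * ∑ i, σ i * (L θ (p.2 i) - L θ (p.1 i))))
        (measurable_sup'_fun hmeasσ).aestronglyMeasurable
      rw [← hcomp]
      refine integral_congr_ae (ae_of_all _ fun p => ?_)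
      show Finset.univ.sup' Finset.univ_nonempty _ = Finset.univ.sup' Finset.univ_nonempty _
      congr 1
      funext θ
      congr 1
      refine Finset.sum_congr rfl fun i _ => ?_
      rcases hσ i with h | h <;>
        simp only [Function.comp, MeasurableEquiv.arrowProdEquivProdArrow,
          Equiv.arrowProdEquivProdArrow, MeasurableEquiv.coe_mk, Equiv.coe_fn_mk,
          MeasurableEquiv.symm_mk, Equiv.coe_fn_symm_mk, h] <;>
        norm_num
    rw [integral_congr_ae h3]
    simp [measure_univ]
  -- Step 4: split the supremum
  have step4 : (∫ ω : (Fin N → X) × ((Fin N → X) × (Fin N → ℝ)),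
        Finset.univ.sup' Finset.univ_nonempty
          (fun θ : Θ => (1 / (N : ℝ)) * ∑ i, ω.2.2 i * (L θ (ω.2.1 i) - L θ (ω.1 i)))
        ∂(A.prod (A.prod S)))
      ≤ (∫ ω : (Fin N → X) × ((Fin N → X) × (Fin N → ℝ)),
          Finset.univ.sup' Finset.univ_nonempty
            (fun θ : Θ => (1 / (N : ℝ)) * ∑ i, ω.2.2 i * L θ (ω.2.1 i)) ∂(A.prod (A.prod S)))
        + ∫ ω : (Fin N → X) × ((Fin N → X) × (Fin N → ℝ)),
            Finset.univ.sup' Finset.univ_nonempty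
              (fun θ : Θ => (1 / (N : ℝ)) * ∑ i, (-(ω.2.2 i)) * L θ (ω.1 i))
            ∂(A.prod (A.prod S)) := by
    rw [← integral_add intH1 intH2]
    refine integral_mono intG (intH1.add intH2) fun ω => ?_
    refine Finset.sup'_le _ _ fun θ _ => ?_
    have hsplit : (1 / (N : ℝ)) * ∑ i, ω.2.2 i * (L θ (ω.2.1 i) - L θ (ω.1 i))
        = (1 / (N : ℝ)) * ∑ i, ω.2.2 i * L θ (ω.2.1 i)
          + (1 / (N : ℝ)) * ∑ i, (-(ω.2.2 i)) * L θ (ω.1 i) := by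
      rw [← mul_add, ← Finset.sum_add_distrib]
      congr 1
      exact Finset.sum_congr rfl fun i _ => by ring
    rw [hsplit]
    exact add_le_add
      (Finset.le_sup' (fun θ : Θ => (1 / (N : ℝ)) * ∑ i, ω.2.2 i * L θ (ω.2.1 i))
        (Finset.mem_univ θ))
      (Finset.le_sup' (fun θ : Θ => (1 / (N : ℝ)) * ∑ i, (-(ω.2.2 i)) * L θ (ω.1 i))
        (Finset.mem_univ θ))
  -- Step 5: the first summand is the Rademacher complexity (ghost copy)
  have step5 : (∫ ω : (Fin N → X) × ((Fin N → X) × (Fin N → ℝ)),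
        Finset.univ.sup' Finset.univ_nonempty
          (fun θ : Θ => (1 / (N : ℝ)) * ∑ i, ω.2.2 i * L θ (ω.2.1 i)) ∂(A.prod (A.prod S)))
      = ∫ q : (Fin N → X) × (Fin N → ℝ), Finset.univ.sup' Finset.univ_nonempty
          (fun θ : Θ => (1 / (N : ℝ)) * ∑ i, q.2 i * L θ (q.1 i)) ∂(A.prod S) :=
    integral_comp_mp mpsnd (measurable_sup'_fun measH).aestronglyMeasurable
  -- Step 6: the second summand, as an integral over (c, σ)
  have mpj : MeasurePreserving (Prod.map (fun c : Fin N → X => c) (Prod.snd))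
      (A.prod (A.prod S)) (A.prod S) :=
    (MeasurePreserving.id A).prod mpsndAS
  have step6 : (∫ ω : (Fin N → X) × ((Fin N → X) × (Fin N → ℝ)),
        Finset.univ.sup' Finset.univ_nonempty
          (fun θ : Θ => (1 / (N : ℝ)) * ∑ i, (-(ω.2.2 i)) * L θ (ω.1 i))
        ∂(A.prod (A.prod S)))
      = ∫ q : (Fin N → X) × (Fin N → ℝ), Finset.univ.sup' Finset.univ_nonempty
          (fun θ : Θ => (1 / (N : ℝ)) * ∑ i, (-(q.2 i)) * L θ (q.1 i)) ∂(A.prod S) :=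
    integral_comp_mp mpj (measurable_sup'_fun measHneg).aestronglyMeasurable
  -- Step 7: symmetry of the Rademacher signs
  have mpnegν : MeasurePreserving (fun x : ℝ => -x) ν ν := by
    refine ⟨measurable_neg, ?_⟩
    rw [hν]
    rw [Measure.map_add _ _ measurable_neg, Measure.map_smul, Measure.map_smul,
      Measure.map_dirac' measurable_neg, Measure.map_dirac' measurable_neg]
    norm_num [add_comm]
  have mpnegS : MeasurePreserving (fun σ : Fin N → ℝ => fun i => -(σ i)) S S := by
    rw [hSdef]
    exact measurePreserving_pi (fun _ : Fin N => ν) (fun _ : Fin N => ν)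
      (f := fun _ (x : ℝ) => -x) (fun i => mpnegν)
  have step7 : (∫ q : (Fin N → X) × (Fin N → ℝ), Finset.univ.sup' Finset.univ_nonempty
          (fun θ : Θ => (1 / (N : ℝ)) * ∑ i, (-(q.2 i)) * L θ (q.1 i)) ∂(A.prod S))
      = ∫ q : (Fin N → X) × (Fin N → ℝ), Finset.univ.sup' Finset.univ_nonempty
          (fun θ : Θ => (1 / (N : ℝ)) * ∑ i, q.2 i * L θ (q.1 i)) ∂(A.prod S) := by
    have mpneg2 : MeasurePreserving
        (Prod.map (fun c : Fin N → X => c) (fun σ : Fin N → ℝ => fun i => -(σ i)))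
        (A.prod S) (A.prod S) := (MeasurePreserving.id A).prod mpnegS
    have hcomp := integral_comp_mp mpneg2
      (g := fun q : (Fin N → X) × (Fin N → ℝ) =>
        Finset.univ.sup' Finset.univ_nonempty
          (fun θ : Θ => (1 / (N : ℝ)) * ∑ i, (-(q.2 i)) * L θ (q.1 i)))
      (measurable_sup'_fun measHneg).aestronglyMeasurable
    rw [← hcomp]
    refine integral_congr_ae (ae_of_all _ fun q => ?_)
    show Finset.univ.sup' Finset.univ_nonempty _ = Finset.univ.sup' Finset.univ_nonempty _
    congr 1
    funext θ
    congr 1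
    exact Finset.sum_congr rfl fun i _ => by simp [Prod.map]
  -- Step 8: identify the RHS
  have step8 : (∫ ω : (Fin N → X) × ((Fin N → X) × (Fin N → ℝ)),
        Finset.univ.sup' Finset.univ_nonempty
          (fun θ : Θ => (1 / (N : ℝ)) * ∑ i, ω.2.2 i * L θ (ω.1 i)) ∂(A.prod (A.prod S)))
      = ∫ q : (Fin N → X) × (Fin N → ℝ), Finset.univ.sup' Finset.univ_nonempty
          (fun θ : Θ => (1 / (N : ℝ)) * ∑ i, q.2 i * L θ (q.1 i)) ∂(A.prod S) :=
    integral_comp_mp mpj (measurable_sup'_fun measH).aestronglyMeasurable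
  calc (∫ ω : (Fin N → X) × ((Fin N → X) × (Fin N → ℝ)),
        Finset.univ.sup' Finset.univ_nonempty
          (fun θ : Θ => (1 / (N : ℝ)) * ∑ i, ((∫ x, L θ x ∂μ) - L θ (ω.1 i)))
        ∂(A.prod (A.prod S)))
      ≤ ∫ p : (Fin N → X) × (Fin N → X), Finset.univ.sup' Finset.univ_nonempty
          (fun θ : Θ => (1 / (N : ℝ)) * ∑ i, (L θ (p.2 i) - L θ (p.1 i))) ∂(A.prod A) := by
        rw [step1]; exact step2
    _ = ∫ ω : (Fin N → X) × ((Fin N → X) × (Fin N → ℝ)),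
          Finset.univ.sup' Finset.univ_nonempty
            (fun θ : Θ => (1 / (N : ℝ)) * ∑ i, ω.2.2 i * (L θ (ω.2.1 i) - L θ (ω.1 i)))
          ∂(A.prod (A.prod S)) := step3
    _ ≤ (∫ ω : (Fin N → X) × ((Fin N → X) × (Fin N → ℝ)),
          Finset.univ.sup' Finset.univ_nonempty
            (fun θ : Θ => (1 / (N : ℝ)) * ∑ i, ω.2.2 i * L θ (ω.2.1 i)) ∂(A.prod (A.prod S)))
        + ∫ ω : (Fin N → X) × ((Fin N → X) × (Fin N → ℝ)),
            Finset.univ.sup' Finset.univ_nonempty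
              (fun θ : Θ => (1 / (N : ℝ)) * ∑ i, (-(ω.2.2 i)) * L θ (ω.1 i))
            ∂(A.prod (A.prod S)) := step4
    _ = (∫ q : (Fin N → X) × (Fin N → ℝ), Finset.univ.sup' Finset.univ_nonempty
          (fun θ : Θ => (1 / (N : ℝ)) * ∑ i, q.2 i * L θ (q.1 i)) ∂(A.prod S))
        + ∫ q : (Fin N → X) × (Fin N → ℝ), Finset.univ.sup' Finset.univ_nonempty
          (fun θ : Θ => (1 / (N : ℝ)) * ∑ i, q.2 i * L θ (q.1 i)) ∂(A.prod S) := by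
        rw [step5, step6, step7]
    _ = 2 * ∫ q : (Fin N → X) × (Fin N → ℝ), Finset.univ.sup' Finset.univ_nonempty
          (fun θ : Θ => (1 / (N : ℝ)) * ∑ i, q.2 i * L θ (q.1 i)) ∂(A.prod S) :=
        (two_mul _).symm
    _ = 2 * ∫ ω : (Fin N → X) × ((Fin N → X) × (Fin N → ℝ)),
          Finset.univ.sup' Finset.univ_nonempty
            (fun θ : Θ => (1 / (N : ℝ)) * ∑ i, ω.2.2 i * L θ (ω.1 i))
          ∂(A.prod (A.prod S)) := by rw [step8]
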